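/- If A : ℝ → Matrix (Fin n) (Fin n) ℝ is continuous and for each s the matrix -A(s) is an M-matrix (so that exp(∫ₛᵗ A(ξ)dξ) is entrywise nonnegative for all s ≤ t), and B : ℝ → (Fin n → ℝ) is continuous with nonnegative entries, then any solution X of X'(t) = A(t)·X(t) + B(t) with X(0) entrywise nonnegative remains entrywise nonnegative for all t ≥ 0. -/

import Mathlib

/-!
For fixed `t`, put `Φ s = exp (∫ ξ in s..t, A ξ)`. Since the `A s` commute, so do all the
integrals of `A`, and `exp` can be differentiated as in the scalar case: `Φ' s = -Φ s * A s`.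
Hence `(Φ X)' = Φ B`, and integrating over `[0, t]` gives the variation of constants formula
`X t = Φ 0 X 0 + ∫ s in 0..t, Φ s B s`. Both terms are entrywise nonnegative when the `Φ s`,
`X 0` and `B s` are.
-/

open Matrix intervalIntegral MeasureTheory NormedSpace Topology

attribute [local instance] Matrix.linftyOpNormedAddCommGroup
  Matrix.linftyOpNormedRing Matrix.linftyOpNormedAlgebra

section NormedAlgebra

variable {𝔸 : Type*} [NormedRing 𝔸] [NormedAlgebra ℝ 𝔸] [CompleteSpace 𝔸]

theorem Commute.intervalIntegral_right {μ : Measure ℝ} {a : 𝔸} {f : ℝ → 𝔸} {b c : ℝ}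
    (h : ∀ x, Commute a (f x)) : Commute a (∫ x in b..c, f x ∂μ) := by
  by_cases hf : IntervalIntegrable f μ b c
  · have hl := (ContinuousLinearMap.mul ℝ 𝔸 a).intervalIntegral_comp_comm hf
    have hr := ((ContinuousLinearMap.mul ℝ 𝔸).flip a).intervalIntegral_comp_comm hf
    simp only [ContinuousLinearMap.mul_apply', ContinuousLinearMap.flip_apply] at hl hr
    rw [Commute, SemiconjBy, ← hl, ← hr]
    exact integral_congr fun x _ => h x
  · rw [integral_undef hf]
    exact Commute.zero_right a

theorem Commute.intervalIntegral_intervalIntegral {μ : Measure ℝ} {f : ℝ → 𝔸}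
    (h : ∀ x y, Commute (f x) (f y)) (a b c d : ℝ) :
    Commute (∫ x in a..b, f x ∂μ) (∫ x in c..d, f x ∂μ) :=
  .intervalIntegral_right fun y => (Commute.intervalIntegral_right fun x => h y x).symm

theorem HasDerivAt.exp_of_commute {H : ℝ → 𝔸} {H' : 𝔸} {s : ℝ} (hH : HasDerivAt H H' s)
    (hcomm : ∀ u, Commute (H s) (H u)) :
    HasDerivAt (fun u => NormedSpace.exp (H u)) (NormedSpace.exp (H s) * H') s := by
  have hball : ∀ x : 𝔸, x ∈ Metric.eball (0 : 𝔸) (expSeries ℝ 𝔸).radius := by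
    simp [expSeries_radius_eq_top]
  have hsplit : (fun u => NormedSpace.exp (H u)) =
      fun u => NormedSpace.exp (H s) * NormedSpace.exp (H u - H s) := by
    funext u
    rw [← exp_add_of_commute_of_mem_ball ((hcomm u).sub_right (Commute.refl _)) (hball _)
      (hball _), add_sub_cancel]
  have hexp : HasFDerivAt NormedSpace.exp (1 : 𝔸 →L[ℝ] 𝔸) (H s - H s) := by
    simpa using hasFDerivAt_exp_zero (𝕂 := ℝ) (𝔸 := 𝔸)
  rw [hsplit]
  simpa using (hexp.comp_hasDerivAt s (hH.sub_const (H s))).const_mul (NormedSpace.exp (H s))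

end NormedAlgebra

namespace Matrix

variable {ι : Type*} [Fintype ι]

theorem _root_.HasDerivAt.matrix_mulVec [DecidableEq ι] {M : ℝ → Matrix ι ι ℝ}
    {v : ℝ → ι → ℝ} {M' : Matrix ι ι ℝ} {v' : ι → ℝ} {s : ℝ} (hM : HasDerivAt M M' s)
    (hv : HasDerivAt v v' s) :
    HasDerivAt (fun s => M s *ᵥ v s) (M s *ᵥ v' + M' *ᵥ v s) s := by
  let L : Matrix ι ι ℝ →L[ℝ] (ι → ℝ) →L[ℝ] ι → ℝ := (mulVecBilin ℝ ℝ).mkContinuous₂ 1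
    fun M v => by simpa using linfty_opNorm_mulVec M v
  exact L.hasDerivAt_of_bilinear (fun _ => hM) (fun _ => hv)

theorem mulVec_nonneg {κ R : Type*} [Semiring R] [PartialOrder R] [IsOrderedRing R]
    {M : Matrix κ ι R} {v : ι → R} (hM : ∀ i j, 0 ≤ M i j) (hv : 0 ≤ v) : 0 ≤ M *ᵥ v :=
  fun i => Finset.sum_nonneg fun j _ => mul_nonneg (hM i j) (hv j)

theorem variation_of_constants [DecidableEq ι] {A : ℝ → Matrix ι ι ℝ} {B X : ℝ → ι → ℝ}
    (hA : Continuous A) (hAcomm : ∀ s t, Commute (A s) (A t)) (hB : Continuous B)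
    (hX : ∀ t, HasDerivAt X (A t *ᵥ X t + B t) t) (t₀ t : ℝ) :
    X t = NormedSpace.exp (∫ ξ in t₀..t, A ξ) *ᵥ X t₀ +
      ∫ s in t₀..t, NormedSpace.exp (∫ ξ in s..t, A ξ) *ᵥ B s := by
  -- `hA` is about the product topology on matrices; the calculus lemmas below see the
  -- (definitionally equal) topology of the `L∞` operator norm.
  replace hA : Continuous[_, PseudoMetricSpace.toUniformSpace.toTopologicalSpace] A := hA
  set Φ : ℝ → Matrix ι ι ℝ := fun s => NormedSpace.exp (∫ ξ in s..t, A ξ)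
  have hΦ : ∀ s, HasDerivAt Φ (Φ s * -A s) s := fun s =>
    (integral_hasDerivAt_left (hA.intervalIntegrable s t)
      hA.aestronglyMeasurable.stronglyMeasurableAtFilter hA.continuousAt).exp_of_commute
      fun u => .intervalIntegral_intervalIntegral hAcomm s t u t
  have hΦX : ∀ s, HasDerivAt (fun s => Φ s *ᵥ X s) (Φ s *ᵥ B s) s := fun s => by
    convert (hΦ s).matrix_mulVec (hX s) using 1
    rw [mulVec_add, ← mulVec_mulVec, neg_mulVec, mulVec_neg]
    abel
  have hΦB : Continuous fun s => Φ s *ᵥ B s :=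
    (continuous_iff_continuousAt.2 fun s => (hΦ s).continuousAt).matrix_mulVec hB
  have hΦt : Φ t = 1 := by simp [Φ]
  rw [integral_eq_sub_of_hasDerivAt (fun s _ => hΦX s) (hΦB.intervalIntegrable t₀ t), hΦt,
    one_mulVec]
  abel

end Matrix

theorem stmt_1 (n : ℕ) (A : ℝ → Matrix (Fin n) (Fin n) ℝ)
    (B : ℝ → Fin n → ℝ) (X : ℝ → Fin n → ℝ)
    (hA : Continuous A)
    (hAcomm : ∀ s t, Commute (A s) (A t))
    (hMmat : ∀ s t, s ≤ t → ∀ i j, 0 ≤ NormedSpace.exp (∫ ξ in s..t, A ξ) i j)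
    (hB : Continuous B) (hBpos : ∀ t i, 0 ≤ B t i)
    (hX : ∀ t, HasDerivAt X ((A t).mulVec (X t) + B t) t)
    (hX0 : ∀ i, 0 ≤ X 0 i) :
    ∀ t ≥ (0 : ℝ), ∀ i, 0 ≤ X t i := by
  intro t ht
  rw [variation_of_constants hA hAcomm hB hX 0 t]
  refine add_nonneg (mulVec_nonneg (hMmat 0 t ht) hX0) ?_
  rw [integral_of_le ht]
  refine integral_nonneg_of_ae <| (ae_restrict_iff' measurableSet_Ioc).2 <| ae_of_all _ ?_
  exact fun s hs => mulVec_nonneg (hMmat s t hs.2) (hBpos s)
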